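/- The eight states |0,0,0⟩, |a,1,0⟩, |a',1,0⟩, |0,b,1⟩, |0,b',1⟩, |1,0,c⟩, |1,0,c'⟩, |1,1,1⟩ in ℂ²⊗ℂ²⊗ℂ², where {|a⟩,|a'⟩}, {|b⟩,|b'⟩}, {|c⟩,|c'⟩} are orthonormal bases of ℂ², are pairwise orthogonal and span ℂ²⊗ℂ²⊗ℂ², i.e., they form an orthogonal product basis. -/

import Mathlib

open scoped ComplexInnerProductSpace Matrix
noncomputable section
/-- A qubit state space `ℂ²`. -/
abbrev Qubit := EuclideanSpace ℂ (Fin 2)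
/-- The standard basis vector `|0⟩`. -/
def e0 : Qubit := EuclideanSpace.single 0 1
/-- The standard basis vector `|1⟩`. -/
def e1 : Qubit := EuclideanSpace.single 1 1
/-- `OB a a'` means `{a, a'}` is an orthonormal basis of `ℂ²`. -/
def OB (a a' : Qubit) : Prop := ⟪a, a⟫ = 1 ∧ ⟪a', a'⟫ = 1 ∧ ⟪a, a'⟫ = 0
/-- The two-qubit product state `a ⊗ b`. -/
def prod2 (a b : Qubit) : EuclideanSpace ℂ (Fin 2 × Fin 2) := WithLp.toLp 2 (fun (p : Fin 2 × Fin 2) => a p.1 * b p.2)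
/-- The three-qubit product state `a ⊗ b ⊗ c`. -/
def prod3 (a b c : Qubit) : EuclideanSpace ℂ (Fin 2 × Fin 2 × Fin 2) :=
  WithLp.toLp 2 (fun (p : Fin 2 × Fin 2 × Fin 2) => a p.1 * b p.2.1 * c p.2.2)
/-- The four-qubit product state `a ⊗ b ⊗ c ⊗ d`. -/
def prod4 (a b c d : Qubit) : EuclideanSpace ℂ (Fin 2 × Fin 2 × Fin 2 × Fin 2) :=
  WithLp.toLp 2 (fun (p : Fin 2 × Fin 2 × Fin 2 × Fin 2) => a p.1 * b p.2.1 * c p.2.2.1 * d p.2.2.2)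
/-- Apply a `2 × 2` matrix to a qubit state. -/
def appM (A : Matrix (Fin 2) (Fin 2) ℂ) (v : Qubit) : Qubit := WithLp.toLp 2 (fun i => ∑ j, A i j * v j)


/-! Inner products of product states factor qubit by qubit. Any two of the eight states differ
in some qubit by a pair of distinct vectors of one of the orthonormal bases `{e0, e1}`,
`{a, a'}`, `{b, b'}`, `{c, c'}`, so the family is orthonormal; being linearly independent and
of size `8 = dim (ℂ²⊗ℂ²⊗ℂ²)`, it spans. -/

lemma inner_prod3 (x y z u v w : Qubit) :
    ⟪prod3 x y z, prod3 u v w⟫ = ⟪x, u⟫ * ⟪y, v⟫ * ⟪z, w⟫ := by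
  simp only [prod3, PiLp.inner_apply, RCLike.inner_apply, Fintype.sum_prod_type,
    Fin.sum_univ_two, map_mul]
  ring

lemma OB_e0_e1 : OB e0 e1 := by
  simp [OB, e0, e1, EuclideanSpace.inner_single_left]

lemma OB.inner_swap {a a' : Qubit} (h : OB a a') : ⟪a', a⟫ = 0 :=
  inner_eq_zero_symm.mp h.2.2

lemma orthonormal_M31 {a a' b b' c c' : Qubit} (ha : OB a a') (hb : OB b b') (hc : OB c c') :
    Orthonormal ℂ ![prod3 e0 e0 e0, prod3 a e1 e0, prod3 a' e1 e0, prod3 e0 b e1,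
      prod3 e0 b' e1, prod3 e1 e0 c, prod3 e1 e0 c', prod3 e1 e1 e1] := by
  have he := OB_e0_e1
  rw [orthonormal_iff_ite]
  intro i j
  fin_cases i <;> fin_cases j <;>
    simp [-inner_self_eq_norm_sq_to_K, inner_prod3, he.1, he.2.1, he.2.2, he.inner_swap,
      ha.1, ha.2.1, ha.2.2, ha.inner_swap, hb.1, hb.2.1, hb.2.2, hb.inner_swap,
      hc.1, hc.2.1, hc.2.2, hc.inner_swap]

/-- The eight states `|0,0,0⟩, |a,1,0⟩, |a',1,0⟩, |0,b,1⟩, |0,b',1⟩,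
|1,0,c⟩, |1,0,c'⟩, |1,1,1⟩`, where `{a,a'}, {b,b'}, {c,c'}` are orthonormal bases of
`ℂ²`, are pairwise orthogonal and span `ℂ²⊗ℂ²⊗ℂ²`, i.e. they form an OPB. -/
theorem M31_is_OPB
    (a a' b b' c c' : Qubit) (ha : OB a a') (hb : OB b b') (hc : OB c c') :
    (∀ j k : Fin 8, j ≠ k →
      ⟪![prod3 e0 e0 e0, prod3 a e1 e0, prod3 a' e1 e0, prod3 e0 b e1,
          prod3 e0 b' e1, prod3 e1 e0 c, prod3 e1 e0 c', prod3 e1 e1 e1] j,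
        ![prod3 e0 e0 e0, prod3 a e1 e0, prod3 a' e1 e0, prod3 e0 b e1,
          prod3 e0 b' e1, prod3 e1 e0 c, prod3 e1 e0 c', prod3 e1 e1 e1] k⟫ = 0) ∧
    Submodule.span ℂ
      (Set.range ![prod3 e0 e0 e0, prod3 a e1 e0, prod3 a' e1 e0, prod3 e0 b e1,
        prod3 e0 b' e1, prod3 e1 e0 c, prod3 e1 e0 c', prod3 e1 e1 e1]) = ⊤ := by
  have horth := orthonormal_M31 ha hb hc
  refine ⟨fun j k hjk => horth.2 hjk, horth.linearIndependent.span_eq_top_of_card_eq_finrank ?_⟩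
  simp
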